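/- arXiv:1508.07627 — 2 statements merged into one kernel-verified Lean document; each statement's English description precedes it below -/
import Mathlib

section
/- Let G be a finite multigraph, k ≥ 1, and suppose M_k(G) is a connected matroid with ground set E. If K is a non-separating cocircuit of M_k(G) (i.e., K is a cocircuit and the deletion M_k(G) \ K is a connected matroid), then K is a vertex star of G, i.e., K = S(x,G) for some vertex x. -/
open Set

/-- A multigraph on vertex type `V` with edge type `E`: each edge has an
unordered pair of endpoints (loops allowed). -/
structure Multigraph (V : Type*) (E : Type*) where
  inc : E → Sym2 V

namespace Multigraph

variable {V E : Type*} (G : Multigraph V E)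

/-- The vertex star `S(x,G)`: the set of edges incident to `x`. -/
def star (x : V) : Set E := {e | x ∈ G.inc e}

/-- The vertex set of the subgraph `G⟨X⟩` induced by an edge set `X`. -/
def verts (X : Set E) : Set V := {v | ∃ e ∈ X, v ∈ G.inc e}

/-- Degree of `v` in the subgraph with edge set `X` (a loop counts twice). -/
noncomputable def deg (X : Set E) (v : V) : ℕ :=
  {e ∈ X | v ∈ G.inc e}.ncard + {e ∈ X | G.inc e = s(v, v)}.ncard

/-- `Δ(G⟨X⟩) = |X| - |V(G⟨X⟩)|`. -/
noncomputable def delta (X : Set E) : ℤ := (X.ncard : ℤ) - ((G.verts X).ncard : ℤ)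

/-- Adjacency via an edge of `X`. -/
def Adj (X : Set E) (a b : V) : Prop := ∃ e ∈ X, G.inc e = s(a, b)

/-- Reachability in the subgraph with edge set `X`. -/
def Reach (X : Set E) : V → V → Prop := Relation.ReflTransGen (G.Adj X)

/-- The subgraph `G⟨X⟩` is connected. -/
def ConnectedOn (X : Set E) : Prop :=
  ∀ a ∈ G.verts X, ∀ b ∈ G.verts X, G.Reach X a b

/-- The edge set of the component of `G⟨X⟩` containing the edge `e`. -/
def edgeComponent (X : Set E) (e : E) : Set E :=
  {f ∈ X | ∃ a ∈ G.inc e, ∃ b ∈ G.inc f, G.Reach X a b}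

/-- The vertex set of the component of the spanning subgraph `(V, X)` containing `v`. -/
def vertexComponent (X : Set E) (v : V) : Set V := {u | G.Reach X v u}

/-- The set of (vertex sets of) components of the spanning subgraph `(V, X)`. -/
def comps (X : Set E) : Set (Set V) := {W | ∃ v : V, W = G.vertexComponent X v}

/-- The component `W` of the spanning subgraph `(V, X)` is a tree:
it is connected and has one more vertex than edges. -/
def TreeOn (X : Set E) (W : Set V) : Prop :=
  (∀ u ∈ W, ∀ w ∈ W, G.Reach X u w) ∧
  ({f ∈ X | ∀ a ∈ G.inc f, a ∈ W}).ncard + 1 = W.ncard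

/-- The edge set `X` forms a cycle: nonempty, connected, all degrees `2`. -/
def IsCycleSet (X : Set E) : Prop :=
  X.Nonempty ∧ G.ConnectedOn X ∧ ∀ v ∈ G.verts X, G.deg X v = 2

/-- `G⟨X⟩` is a cacti-graph: no isolated vertices, no leaves
(i.e. all degrees at least `2`), and no component is a cycle. -/
def CactiSet (X : Set E) : Prop :=
  (∀ v ∈ G.verts X, 2 ≤ G.deg X v) ∧
  ∀ e ∈ X, ¬ G.IsCycleSet (G.edgeComponent X e)

/-- The circuits of the `k`-circular matroid `M_k(G)`:
edge sets `C` with `Δ(G⟨C⟩) = k` and `G⟨C⟩` a cacti-graph. -/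
def CircuitSet (k : ℕ) (X : Set E) : Prop :=
  G.delta X = (k : ℤ) ∧ G.CactiSet X

/-- Some component of `G⟨X⟩` is a tree. -/
def HasTreeComponent (X : Set E) : Prop :=
  ∃ e ∈ X,
    (G.edgeComponent X e).ncard + 1 = (G.verts (G.edgeComponent X e)).ncard

/-- The edge set of the kernel `⌊G⌋`: the maximal subgraph with
no leaves and no isolated vertices. -/
def kernelE : Set E := ⋃₀ {X : Set E | ∀ v ∈ G.verts X, 2 ≤ G.deg X v}

end Multigraph

namespace Matroid

variable {α : Type*}

/-- A circuit of a matroid: a minimal dependent subset of the ground set. -/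
def Circuit' (M : Matroid α) (C : Set α) : Prop :=
  C ⊆ M.E ∧ ¬ M.Indep C ∧ ∀ x ∈ C, M.Indep (C \ {x})

/-- A cocircuit of `M` is a circuit of the dual matroid `M✶`. -/
def Cocircuit' (M : Matroid α) (K : Set α) : Prop := M✶.Circuit' K

/-- The rank of a (finite) matroid: the common cardinality of its bases. -/
noncomputable def rankN (M : Matroid α) : ℕ :=
  sSup {n | ∃ B, M.IsBase B ∧ B.ncard = n}

/-- The corank `ρ*(M)` of a matroid: the rank of the dual matroid. -/
noncomputable def corankN (M : Matroid α) : ℕ := M✶.rankN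

/-- A matroid is connected if it has no loops, no coloops, and every two
elements of the ground set lie in a common circuit. -/
def ConnectedM (M : Matroid α) : Prop :=
  (∀ e ∈ M.E, M.Indep {e}) ∧ (∀ e ∈ M.E, ∃ B, M.IsBase B ∧ e ∉ B) ∧
  (∀ e ∈ M.E, ∀ f ∈ M.E, ∃ C, M.Circuit' C ∧ e ∈ C ∧ f ∈ C)

end Matroid


/-! ### Auxiliary development -/

section AuxGraph

open Multigraph

namespace Multigraph

variable {V E : Type*} [Fintype V] [Fintype E] (G : Multigraph V E)

/-- Minimum degree at least 2. -/
def Min2 (X : Set E) : Prop := ∀ v ∈ G.verts X, 2 ≤ G.deg X v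

/-- The kernel of the subgraph `G⟨X⟩`. -/
def ker (X : Set E) : Set E := ⋃₀ {Z : Set E | Z ⊆ X ∧ G.Min2 Z}

variable {G}

lemma verts_mono {X Y : Set E} (h : X ⊆ Y) : G.verts X ⊆ G.verts Y := by
  rintro v ⟨e, he, hv⟩; exact ⟨e, h he, hv⟩

lemma verts_union {X Y : Set E} : G.verts (X ∪ Y) = G.verts X ∪ G.verts Y := by
  ext v
  constructor
  · rintro ⟨e, he | he, hv⟩
    exacts [Or.inl ⟨e, he, hv⟩, Or.inr ⟨e, he, hv⟩]
  · rintro (⟨e, he, hv⟩ | ⟨e, he, hv⟩)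
    exacts [⟨e, Or.inl he, hv⟩, ⟨e, Or.inr he, hv⟩]

lemma verts_empty (G : Multigraph V E) : G.verts (∅ : Set E) = (∅ : Set V) := by
  ext v; simp [Multigraph.verts]

lemma delta_empty (G : Multigraph V E) : G.delta (∅ : Set E) = 0 := by
  simp [Multigraph.delta, verts_empty]

lemma deg_mono {X Y : Set E} (h : X ⊆ Y) (v : V) : G.deg X v ≤ G.deg Y v := by
  unfold Multigraph.deg
  have h1 : {e | e ∈ X ∧ v ∈ G.inc e} ⊆ {e | e ∈ Y ∧ v ∈ G.inc e} :=
    fun e he => ⟨h he.1, he.2⟩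
  have h2 : {e | e ∈ X ∧ G.inc e = s(v,v)} ⊆ {e | e ∈ Y ∧ G.inc e = s(v,v)} :=
    fun e he => ⟨h he.1, he.2⟩
  exact Nat.add_le_add (Set.ncard_le_ncard h1 (Set.toFinite _))
    (Set.ncard_le_ncard h2 (Set.toFinite _))

open scoped Classical in
lemma ncard_sep_eq_sum (X : Set E) (P : E → Prop) :
    {e | e ∈ X ∧ P e}.ncard = ∑ e ∈ X.toFinite.toFinset, (if P e then 1 else 0) := by
  rw [← Finset.card_filter, ← Set.ncard_coe_finset]
  congr 1
  ext e
  simp only [Finset.coe_filter, Set.Finite.mem_toFinset, Set.mem_setOf_eq]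

open scoped Classical in
lemma sym2_count (z : Sym2 V) :
    ∑ v : V, ((if v ∈ z then 1 else 0) + (if z = s(v,v) then 1 else 0)) = (2:ℕ) := by
  induction z using Sym2.ind with
  | _ a b =>
    by_cases hab : a = b
    · subst hab
      have h : ∀ v : V,
          ((if v ∈ s(a,a) then (1:ℕ) else 0) + (if s(a,a) = s(v,v) then 1 else 0))
            = (if v = a then 2 else 0) := by
        intro v
        by_cases hv : v = a
        · subst hv; simp
        · have h1 : v ∉ s(a,a) := by
            rw [Sym2.mem_iff]; rintro (h | h) <;> exact hv h
          have h2 : s(a,a) ≠ s(v,v) := by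
            intro h
            rcases Sym2.eq_iff.mp h with ⟨h3, _⟩ | ⟨h3, _⟩ <;> exact hv h3.symm
          simp [h1, h2, hv]
      rw [Finset.sum_congr rfl fun v _ => h v, Finset.sum_ite_eq' Finset.univ a fun _ => 2]
      simp
    · have h : ∀ v : V,
          ((if v ∈ s(a,b) then (1:ℕ) else 0) + (if s(a,b) = s(v,v) then 1 else 0))
            = (if v = a then 1 else 0) + (if v = b then 1 else 0) := by
        intro v
        have h2 : s(a,b) ≠ s(v,v) := by
          intro h
          rcases Sym2.eq_iff.mp h with ⟨h3, h4⟩ | ⟨h3, h4⟩ <;> exact hab (h3.trans h4.symm)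
        by_cases hva : v = a
        · have hm : v ∈ s(a,b) := by rw [Sym2.mem_iff]; exact Or.inl hva
          have hvb : v ≠ b := fun h => hab (hva.symm.trans h)
          have hba : b ≠ a := fun h => hab h.symm
          simp [hm, h2, hva, hvb, hab, hba]
        · by_cases hvb : v = b
          · have hm : v ∈ s(a,b) := by rw [Sym2.mem_iff]; exact Or.inr hvb
            have hba : b ≠ a := fun h => hab h.symm
            simp [hm, h2, hva, hvb, hab, hba]
          · have hm : v ∉ s(a,b) := by
              rw [Sym2.mem_iff]; rintro (h | h); exacts [hva h, hvb h]
            simp [hm, h2, hva, hvb]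
      rw [Finset.sum_congr rfl fun v _ => h v, Finset.sum_add_distrib,
        Finset.sum_ite_eq' Finset.univ a fun _ => 1,
        Finset.sum_ite_eq' Finset.univ b fun _ => 1]
      simp

open scoped Classical in
lemma sum_deg (X : Set E) : ∑ v : V, G.deg X v = 2 * X.ncard := by
  have hdeg : ∀ v : V, G.deg X v = ∑ e ∈ X.toFinite.toFinset,
      ((if v ∈ G.inc e then 1 else 0) + (if G.inc e = s(v,v) then 1 else 0)) := by
    intro v
    rw [Finset.sum_add_distrib]
    unfold Multigraph.deg
    rw [ncard_sep_eq_sum, ncard_sep_eq_sum]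
    congr 1 <;> exact Finset.sum_congr rfl fun y _ => by congr 1
  rw [Finset.sum_congr rfl fun v _ => hdeg v, Finset.sum_comm]
  rw [Finset.sum_congr rfl fun e _ => sym2_count (G.inc e), Finset.sum_const,
    smul_eq_mul, Set.ncard_eq_toFinset_card X X.toFinite, mul_comm]

lemma deg_eq_zero_of_not_mem_verts {X : Set E} {v : V} (hv : v ∉ G.verts X) :
    G.deg X v = 0 := by
  unfold Multigraph.deg
  have e1 : {e | e ∈ X ∧ v ∈ G.inc e} = ∅ := by
    ext e; simp only [Set.mem_setOf_eq, Set.mem_empty_iff_false, iff_false, not_and]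
    exact fun heX hvi => absurd ⟨e, heX, hvi⟩ hv
  have e2 : {e | e ∈ X ∧ G.inc e = s(v,v)} = ∅ := by
    ext e; simp only [Set.mem_setOf_eq, Set.mem_empty_iff_false, iff_false, not_and]
    intro heX hvi
    exact absurd ⟨e, heX, by rw [hvi]; exact Sym2.mem_mk_left v v⟩ hv
  rw [e1, e2]; simp

open scoped Classical in
lemma delta_of_cycle {Q : Set E} (h : G.IsCycleSet Q) : G.delta Q = 0 := by
  have h2 : ∀ v : V, G.deg Q v = if v ∈ G.verts Q then 2 else 0 := by
    intro v
    by_cases hv : v ∈ G.verts Q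
    · simp [hv, h.2.2 v hv]
    · simp [hv, deg_eq_zero_of_not_mem_verts hv]
  have hsum := sum_deg (G := G) Q
  rw [Finset.sum_congr rfl fun v _ => h2 v, ← Finset.sum_filter, Finset.sum_const,
    smul_eq_mul] at hsum
  have hcard : (Finset.univ.filter (fun v => v ∈ G.verts Q)).card = (G.verts Q).ncard := by
    rw [Set.ncard_eq_toFinset_card _ (G.verts Q).toFinite]
    congr 1
    ext v
    simp only [Finset.mem_filter, Finset.mem_univ, true_and, Set.Finite.mem_toFinset]
  rw [hcard] at hsum
  unfold Multigraph.delta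
  omega

lemma delta_union {X Y : Set E} (hE : Disjoint X Y)
    (hV : Disjoint (G.verts X) (G.verts Y)) :
    G.delta (X ∪ Y) = G.delta X + G.delta Y := by
  unfold Multigraph.delta
  rw [verts_union, Set.ncard_union_eq hE (Set.toFinite _) (Set.toFinite _),
    Set.ncard_union_eq hV (Set.toFinite _) (Set.toFinite _)]
  push_cast
  ring

/-! kernel lemmas -/

lemma ker_subset (G : Multigraph V E) (X : Set E) : G.ker X ⊆ X :=
  Set.sUnion_subset fun _ hZ => hZ.1

lemma subset_ker {X Z : Set E} (hZX : Z ⊆ X) (h2 : G.Min2 Z) : Z ⊆ G.ker X :=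
  Set.subset_sUnion_of_mem ⟨hZX, h2⟩

lemma min2_ker (G : Multigraph V E) (X : Set E) : G.Min2 (G.ker X) := by
  rintro v ⟨e, he, hv⟩
  obtain ⟨Z, hZ, heZ⟩ := he
  calc 2 ≤ G.deg Z v := hZ.2 v ⟨e, heZ, hv⟩
    _ ≤ G.deg (G.ker X) v := deg_mono (Set.subset_sUnion_of_mem hZ) v

lemma delta_le_delta_ker_aux :
    ∀ (n : ℕ) (X : Set E), X.ncard ≤ n → G.delta X ≤ G.delta (G.ker X) := by
  intro n
  induction n with
  | zero =>
    intro X h0 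
    have hX : X = ∅ := by
      rw [← Set.ncard_eq_zero (Set.toFinite X)]; omega
    subst hX
    have : G.ker (∅ : Set E) = (∅ : Set E) :=
      Set.Subset.antisymm (ker_subset G ∅)
        (subset_ker (Set.Subset.refl _) (fun v hv => by rw [verts_empty] at hv; exact absurd hv (Set.notMem_empty v)))
    rw [this]
  | succ n ih =>
    intro X hle
    by_cases hm : G.Min2 X
    · have : G.ker X = X := Set.Subset.antisymm (ker_subset G X) (subset_ker (Set.Subset.refl _) hm)
      rw [this]
    · rw [Multigraph.Min2] at hm
      push_neg at hm
      obtain ⟨v, hv, hlt⟩ := hm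
      have hA1 : 1 ≤ {e | e ∈ X ∧ v ∈ G.inc e}.ncard := by
        rw [Nat.one_le_iff_ne_zero]
        intro h0
        obtain ⟨e, he, hvi⟩ := hv
        have hmem : e ∈ {e | e ∈ X ∧ v ∈ G.inc e} := ⟨he, hvi⟩
        rw [(Set.ncard_eq_zero (Set.toFinite _)).mp h0] at hmem
        exact hmem
      have hdeg : G.deg X v = {e | e ∈ X ∧ v ∈ G.inc e}.ncard
          + {e | e ∈ X ∧ G.inc e = s(v,v)}.ncard := rfl
      have hA : {e | e ∈ X ∧ v ∈ G.inc e}.ncard = 1 := by omega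
      have hB : {e | e ∈ X ∧ G.inc e = s(v,v)}.ncard = 0 := by omega
      obtain ⟨g, hgA⟩ := Set.ncard_eq_one.mp hA
      have hgX : g ∈ X ∧ v ∈ G.inc g := by
        have : g ∈ {e | e ∈ X ∧ v ∈ G.inc e} := by rw [hgA]; rfl
        exact this
      set X' := X \ {g} with hX'
      have hker : G.ker X' = G.ker X := by
        have hfam : {Z : Set E | Z ⊆ X' ∧ G.Min2 Z} = {Z : Set E | Z ⊆ X ∧ G.Min2 Z} := by
          ext Z
          constructor
          · rintro ⟨hs, hm2⟩
            exact ⟨hs.trans Set.diff_subset, hm2⟩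
          · rintro ⟨hs, hm2⟩
            refine ⟨fun z hz => ⟨hs hz, ?_⟩, hm2⟩
            rintro rfl
            have hvZ : v ∈ G.verts Z := ⟨z, hz, hgX.2⟩
            have := hm2 v hvZ
            have := deg_mono (G := G) hs v
            omega
        rw [Multigraph.ker, Multigraph.ker, hfam]
      have hvX' : v ∉ G.verts X' := by
        rintro ⟨e, ⟨heX, heg⟩, hvi⟩
        have : e ∈ {e | e ∈ X ∧ v ∈ G.inc e} := ⟨heX, hvi⟩
        rw [hgA] at this
        exact heg this
      have hsubV : G.verts X' ⊆ G.verts X \ {v} := by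
        rintro w ⟨e, ⟨heX, heg⟩, hw⟩
        refine ⟨⟨e, heX, hw⟩, ?_⟩
        rintro rfl
        have : e ∈ {e | e ∈ X ∧ w ∈ G.inc e} := ⟨heX, hw⟩
        rw [hgA] at this
        exact heg this
      have hc1 : X'.ncard = X.ncard - 1 := Set.ncard_diff_singleton_of_mem hgX.1
      have hc2 : (G.verts X').ncard ≤ (G.verts X).ncard - 1 := by
        calc (G.verts X').ncard ≤ (G.verts X \ {v}).ncard :=
              Set.ncard_le_ncard hsubV (Set.toFinite _)
          _ = (G.verts X).ncard - 1 := Set.ncard_diff_singleton_of_mem hv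
      have hX1 : 1 ≤ X.ncard := by
        rw [Nat.one_le_iff_ne_zero, Ne, Set.ncard_eq_zero (Set.toFinite _)]
        rintro rfl
        exact hgX.1
      have hv1 : 1 ≤ (G.verts X).ncard := by
        rw [Nat.one_le_iff_ne_zero, Ne, Set.ncard_eq_zero (Set.toFinite _)]
        intro h0
        rw [h0] at hv
        exact hv
      have hdd : G.delta X ≤ G.delta X' := by
        unfold Multigraph.delta
        have := Set.ncard_le_ncard (Set.diff_subset : X \ {g} ⊆ X) (Set.toFinite X)
        omega
      have hrec : G.delta X' ≤ G.delta (G.ker X') := by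
        apply ih
        omega
      rw [hker] at hrec
      exact hdd.trans hrec

lemma delta_le_delta_ker (G : Multigraph V E) (X : Set E) :
    G.delta X ≤ G.delta (G.ker X) :=
  delta_le_delta_ker_aux X.ncard X le_rfl

/-! reachability and components -/

lemma sym2_exists {α : Type*} (z : Sym2 α) : ∃ p q, z = s(p,q) := by
  induction z using Sym2.ind with
  | _ p q => exact ⟨p, q, rfl⟩

lemma reach_of_mem {X : Set E} {e : E} {a b : V} (he : e ∈ X) (ha : a ∈ G.inc e)
    (hb : b ∈ G.inc e) : G.Reach X a b := by
  by_cases hab : a = b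
  · subst hab; exact Relation.ReflTransGen.refl
  · refine Relation.ReflTransGen.single ⟨e, he, ?_⟩
    obtain ⟨p, q, hz⟩ := sym2_exists (G.inc e)
    rw [hz] at ha hb ⊢
    rw [Sym2.mem_iff] at ha hb
    rcases ha with rfl | rfl <;> rcases hb with rfl | rfl
    · exact absurd rfl hab
    · rfl
    · exact Sym2.eq_swap
    · exact absurd rfl hab

lemma mem_edgeComponent_self {X : Set E} {e : E} (he : e ∈ X) :
    e ∈ G.edgeComponent X e := by
  obtain ⟨p, q, hz⟩ := sym2_exists (G.inc e)
  exact ⟨he, p, by rw [hz]; exact Sym2.mem_mk_left p q,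
    p, by rw [hz]; exact Sym2.mem_mk_left p q, Relation.ReflTransGen.refl⟩

lemma mem_edgeComponent_of {X : Set E} {f g : E} {b : V} (hg : g ∈ X)
    (hb : b ∈ G.inc g) (hbv : b ∈ G.verts (G.edgeComponent X f)) :
    g ∈ G.edgeComponent X f := by
  obtain ⟨h, hh, hbh⟩ := hbv
  obtain ⟨hhX, a, ha, b', hb', hr⟩ := hh
  exact ⟨hg, a, ha, b, hb, hr.trans (reach_of_mem hhX hb' hbh)⟩

/-! stripping cycle components -/

lemma cacti_empty (G : Multigraph V E) : G.CactiSet (∅ : Set E) :=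
  ⟨fun v hv => by rw [verts_empty] at hv; exact absurd hv (Set.notMem_empty v),
   fun e he => absurd he (Set.notMem_empty e)⟩

lemma exists_cacti_subset_aux :
    ∀ (n : ℕ) (W : Set E), W.ncard ≤ n → G.Min2 W →
      ∃ W₁, W₁ ⊆ W ∧ G.CactiSet W₁ ∧ G.delta W₁ = G.delta W := by
  intro n
  induction n with
  | zero =>
    intro W h0 _
    have hW : W = ∅ := by rw [← Set.ncard_eq_zero (Set.toFinite W)]; omega
    subst hW
    exact ⟨∅, Set.Subset.refl _, cacti_empty G, rfl⟩
  | succ n ih =>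
    intro W hle hm
    by_cases hc : G.CactiSet W
    · exact ⟨W, Set.Subset.refl _, hc, rfl⟩
    · have hcyc : ∃ f ∈ W, G.IsCycleSet (G.edgeComponent W f) := by
        by_contra h'
        push_neg at h'
        exact hc ⟨hm, h'⟩
      obtain ⟨f, hfW, hcyc⟩ := hcyc
      set Q := G.edgeComponent W f with hQ
      have hQW : Q ⊆ W := fun e he => he.1
      have hclosed : ∀ g ∈ W, ∀ b ∈ G.inc g, b ∈ G.verts Q → g ∈ Q :=
        fun g hg b hb hbv => mem_edgeComponent_of hg hb hbv
      have hdisjV : ∀ v ∈ G.verts (W \ Q), v ∉ G.verts Q := by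
        rintro v ⟨g, ⟨hgW, hgQ⟩, hv⟩ hvQ
        exact hgQ (hclosed g hgW v hv hvQ)
      have hun : Q ∪ (W \ Q) = W := Set.union_diff_cancel hQW
      have hdelta : G.delta W = G.delta Q + G.delta (W \ Q) := by
        conv_lhs => rw [← hun]
        exact delta_union Set.disjoint_sdiff_right
          (Set.disjoint_left.mpr fun v hvQ hv' => hdisjV v hv' hvQ)
      have hdQ : G.delta Q = 0 := delta_of_cycle hcyc
      have hmin2 : G.Min2 (W \ Q) := by
        intro v hv
        have hvQ := hdisjV v hv
        have hAeq : {e | e ∈ W \ Q ∧ v ∈ G.inc e} = {e | e ∈ W ∧ v ∈ G.inc e} := by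
          ext e
          constructor
          · rintro ⟨⟨h1, _⟩, h2⟩; exact ⟨h1, h2⟩
          · rintro ⟨heW, hvi⟩
            exact ⟨⟨heW, fun heQ => hvQ ⟨e, heQ, hvi⟩⟩, hvi⟩
        have hBeq : {e | e ∈ W \ Q ∧ G.inc e = s(v,v)} = {e | e ∈ W ∧ G.inc e = s(v,v)} := by
          ext e
          constructor
          · rintro ⟨⟨h1, _⟩, h2⟩; exact ⟨h1, h2⟩
          · rintro ⟨heW, hvi⟩
            refine ⟨⟨heW, fun heQ => hvQ ⟨e, heQ, ?_⟩⟩, hvi⟩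
            rw [hvi]; exact Sym2.mem_mk_left v v
        have hdeq : G.deg (W \ Q) v = G.deg W v := by
          unfold Multigraph.deg
          rw [hAeq, hBeq]
        rw [hdeq]
        exact hm v (verts_mono Set.diff_subset hv)
      obtain ⟨q, hq⟩ := hcyc.1
      have hsize : (W \ Q).ncard ≤ n := by
        have h1 : W \ Q ⊆ W \ {q} :=
          Set.diff_subset_diff_right (Set.singleton_subset_iff.mpr hq)
        have h2 : (W \ {q}).ncard = W.ncard - 1 :=
          Set.ncard_diff_singleton_of_mem (hQW hq)
        have h3 := Set.ncard_le_ncard h1 (Set.toFinite _)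
        have h4 : 1 ≤ W.ncard := by
          rw [Nat.one_le_iff_ne_zero, Ne, Set.ncard_eq_zero (Set.toFinite _)]
          rintro rfl
          exact hQW hq
        omega
      obtain ⟨W₁, hsub, hcacti, hd⟩ := ih (W \ Q) hsize hmin2
      exact ⟨W₁, hsub.trans Set.diff_subset, hcacti, by rw [hd, hdelta, hdQ]; ring⟩

lemma exists_circuitset_subset_aux {k : ℕ} (hk : 1 ≤ k) :
    ∀ (n : ℕ) (W : Set E), W.ncard ≤ n → G.Min2 W → (k:ℤ) ≤ G.delta W →
      ∃ Y, Y ⊆ W ∧ G.CircuitSet k Y := by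
  intro n
  induction n with
  | zero =>
    intro W h0 _ hdel
    have hW : W = ∅ := by rw [← Set.ncard_eq_zero (Set.toFinite W)]; omega
    subst hW
    rw [delta_empty] at hdel
    have : (1:ℤ) ≤ (k:ℤ) := by exact_mod_cast hk
    omega
  | succ n ih =>
    intro W hle hm hdel
    obtain ⟨W₁, hsub, hcacti, hd⟩ := exists_cacti_subset_aux W.ncard W le_rfl hm
    by_cases heq : G.delta W = (k:ℤ)
    · exact ⟨W₁, hsub, by rw [hd, heq], hcacti⟩
    · have hgt : (k:ℤ) + 1 ≤ G.delta W := by omega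
      have hne : W₁.Nonempty := by
        rw [Set.nonempty_iff_ne_empty]
        rintro rfl
        rw [delta_empty] at hd
        have : (1:ℤ) ≤ (k:ℤ) := by exact_mod_cast hk
        omega
      obtain ⟨f, hf⟩ := hne
      set W₂ := G.ker (W₁ \ {f}) with hW₂
      have hd1 : G.delta W₁ = G.delta W := hd
      have hdf : G.delta W₁ - 1 ≤ G.delta (W₁ \ {f}) := by
        unfold Multigraph.delta
        have h1 : (W₁ \ {f}).ncard = W₁.ncard - 1 :=
          Set.ncard_diff_singleton_of_mem hf
        have h2 : (G.verts (W₁ \ {f})).ncard ≤ (G.verts W₁).ncard :=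
          Set.ncard_le_ncard (verts_mono Set.diff_subset) (Set.toFinite _)
        have h4 : 1 ≤ W₁.ncard := by
          rw [Nat.one_le_iff_ne_zero, Ne, Set.ncard_eq_zero (Set.toFinite _)]
          rintro rfl
          exact hf
        omega
      have hd2 : (k:ℤ) ≤ G.delta W₂ := by
        have h5 := delta_le_delta_ker G (W₁ \ {f})
        have h6 : G.delta (G.ker (W₁ \ {f})) = G.delta W₂ := rfl
        omega
      have hsize : W₂.ncard ≤ n := by
        have h1 : W₂ ⊆ W₁ \ {f} := ker_subset G _
        have h2 : (W₁ \ {f}).ncard = W₁.ncard - 1 :=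
          Set.ncard_diff_singleton_of_mem hf
        have h3 := Set.ncard_le_ncard h1 (Set.toFinite _)
        have h4 := Set.ncard_le_ncard hsub (Set.toFinite W)
        have h5 : 1 ≤ W₁.ncard := by
          rw [Nat.one_le_iff_ne_zero, Ne, Set.ncard_eq_zero (Set.toFinite _)]
          rintro rfl
          exact hf
        omega
      obtain ⟨Y, hYsub, hY⟩ := ih W₂ hsize (min2_ker G _) hd2
      exact ⟨Y, hYsub.trans ((ker_subset G _).trans (Set.diff_subset.trans hsub)), hY⟩

lemma exists_circuitset_subset {k : ℕ} (hk : 1 ≤ k) {W : Set E} (hm : G.Min2 W)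
    (hdel : (k:ℤ) ≤ G.delta W) : ∃ Y, Y ⊆ W ∧ G.CircuitSet k Y :=
  exists_circuitset_subset_aux hk W.ncard W le_rfl hm hdel

end Multigraph

end AuxGraph

section AuxMatroid

open Multigraph

lemma exists_circuit'_subset_aux {E : Type*} [Fintype E] (M : Matroid E)
    (hME : M.E = Set.univ) :
    ∀ (n : ℕ) (X : Set E), X.ncard ≤ n → ¬ M.Indep X → ∃ C, C ⊆ X ∧ M.Circuit' C := by
  intro n
  induction n with
  | zero =>
    intro X h0 hdep
    have hX : X = ∅ := by rw [← Set.ncard_eq_zero (Set.toFinite X)]; omega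
    subst hX
    exact absurd M.empty_indep hdep
  | succ n ih =>
    intro X hle hdep
    by_cases hall : ∀ x ∈ X, M.Indep (X \ {x})
    · exact ⟨X, Set.Subset.refl _, by rw [hME]; exact Set.subset_univ X, hdep, hall⟩
    · push_neg at hall
      obtain ⟨x, hx, hdep'⟩ := hall
      have h1 : (X \ {x}).ncard = X.ncard - 1 :=
        Set.ncard_diff_singleton_of_mem hx
      have h4 : 1 ≤ X.ncard := by
        rw [Nat.one_le_iff_ne_zero, Ne, Set.ncard_eq_zero (Set.toFinite _)]
        rintro rfl
        exact hx
      obtain ⟨C, hCsub, hC⟩ := ih (X \ {x}) (by omega) hdep'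
      exact ⟨C, hCsub.trans Set.diff_subset, hC⟩

lemma exists_circuit'_subset {E : Type*} [Fintype E] {M : Matroid E}
    (hME : M.E = Set.univ) {X : Set E} (hdep : ¬ M.Indep X) :
    ∃ C, C ⊆ X ∧ M.Circuit' C :=
  exists_circuit'_subset_aux M hME X.ncard X le_rfl hdep

lemma not_indep_of_delta_ge {V E : Type*} [Fintype V] [Fintype E] {G : Multigraph V E}
    {k : ℕ} (hk : 1 ≤ k) {M : Matroid E}
    (hMC : ∀ C : Set E, M.Circuit' C ↔ G.CircuitSet k C)
    {X : Set E} (hdel : (k:ℤ) ≤ G.delta X) : ¬ M.Indep X := by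
  intro hI
  have h1 : (k:ℤ) ≤ G.delta (G.ker X) := le_trans hdel (delta_le_delta_ker G X)
  obtain ⟨Y, hYsub, hCS⟩ := exists_circuitset_subset hk (min2_ker G X) h1
  have hYX : Y ⊆ X := hYsub.trans (ker_subset G X)
  exact ((hMC Y).mpr hCS).2.1 (hI.subset hYX)

end AuxMatroid

/-- every non-separating cocircuit of a connected `M_k(G)` is a
vertex star of `G`. -/
theorem stmt16 {V E : Type*} [Fintype V] [Fintype E] (G : Multigraph V E)
    (k : ℕ) (hk : 1 ≤ k) (M : Matroid E) (hME : M.E = Set.univ)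
    (hMC : ∀ C : Set E, M.Circuit' C ↔ G.CircuitSet k C)
    (hconn : M.ConnectedM) (K : Set E)
    (hK : M.Cocircuit' K) (hns : (M.restrict (M.E \ K)).ConnectedM) :
    ∃ x : V, K = G.star x := by
  classical
  set D : Set E := M.E \ K with hD
  obtain ⟨hKE, hKdep, hKmin⟩ := hK
  have hKE' : K ⊆ M.E := hKE
  -- every base meets K
  have ha : ∀ B, M.IsBase B → (B ∩ K).Nonempty := by
    intro B hB
    by_contra hcon
    apply hKdep
    rw [Matroid.dual_indep_iff_exists']
    refine ⟨hKE', B, hB, ?_⟩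
    rw [Set.disjoint_iff_inter_eq_empty, Set.inter_comm]
    exact Set.not_nonempty_iff_eq_empty.mp hcon
  -- for each e ∈ K there is a base avoiding K \ {e}
  have hb : ∀ e ∈ K, ∃ B, M.IsBase B ∧ Disjoint (K \ {e}) B := by
    intro e he
    have := hKmin e he
    rw [Matroid.dual_indep_iff_exists'] at this
    obtain ⟨-, B, hB, hdisj⟩ := this
    exact ⟨B, hB, hdisj⟩
  -- K is nonempty
  have hKne : K.Nonempty := by
    rw [Set.nonempty_iff_ne_empty]
    rintro rfl
    exact hKdep M✶.empty_indep
  -- F1 : no element of K is in the closure of D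
  have hcl : ∀ e ∈ K, e ∉ M.closure D := by
    intro e he hecl
    obtain ⟨B, hB, hdisj⟩ := hb e he
    have hBsub : B ⊆ insert e D := by
      intro x hx
      by_cases hxK : x ∈ K
      · have : x ∉ K \ {e} := fun hmem => (hdisj.le_bot ⟨hmem, hx⟩ : x ∈ (⊥ : Set E))
        have hxe : x = e := by
          by_contra hne
          exact this ⟨hxK, hne⟩
        exact hxe ▸ Set.mem_insert e D
      · exact Set.mem_insert_of_mem e ⟨hB.subset_ground hx, hxK⟩
    have hDE : D ⊆ M.E := Set.diff_subset
    have hsp : M.Spanning (insert e D) :=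
      hB.spanning_of_superset hBsub (Set.insert_subset (hKE' he) hDE)
    have hsub2 : insert e D ⊆ M.closure D :=
      Set.insert_subset hecl (M.subset_closure D hDE)
    have hclD : M.closure (insert e D) ⊆ M.closure D :=
      M.closure_subset_closure_of_subset_closure hsub2
    have hspD : M.Spanning D := by
      rw [Matroid.spanning_iff_closure_eq hDE]
      exact Set.Subset.antisymm (M.closure_subset_ground D)
        (by rw [← hsp.closure_eq]; exact hclD)
    obtain ⟨B', hB', hB'D⟩ := hspD.exists_isBase_subset
    obtain ⟨y, hyB', hyK⟩ := ha B' hB'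
    exact (hB'D hyB').2 hyK
  -- A' : every edge of K has an endpoint not covered by D
  have hA' : ∀ e ∈ K, ∃ w ∈ G.inc e, w ∉ G.verts D := by
    intro e he
    by_contra hcon
    push_neg at hcon
    obtain ⟨u, v, hz⟩ := Multigraph.sym2_exists (G.inc e)
    · have hu : u ∈ G.verts D := hcon u (by rw [hz]; exact Sym2.mem_mk_left u v)
      have hv : v ∈ G.verts D := hcon v (by rw [hz]; exact Sym2.mem_mk_right u v)
      obtain ⟨fu, hfuD, hufu⟩ := hu
      obtain ⟨fv, hfvD, hvfv⟩ := hv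
      obtain ⟨-, -, hns3⟩ := hns
      obtain ⟨C₀, hC₀circ, hfuC₀, hfvC₀⟩ :=
        hns3 fu (by exact hfuD) fv (by exact hfvD)
      obtain ⟨hC₀E, hC₀dep, hC₀min⟩ := hC₀circ
      have hC₀D : C₀ ⊆ D := hC₀E
      have hMcirc : M.Circuit' C₀ := by
        refine ⟨hC₀D.trans Set.diff_subset, ?_, ?_⟩
        · intro hI
          exact hC₀dep (Matroid.restrict_indep_iff.mpr ⟨hI, hC₀D⟩)
        · intro x hx
          exact (Matroid.restrict_indep_iff.mp (hC₀min x hx)).1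
      have hCS : G.CircuitSet k C₀ := (hMC C₀).mp hMcirc
      have hC₀ne : C₀.Nonempty := by
        rw [Set.nonempty_iff_ne_empty]
        rintro rfl
        exact hMcirc.2.1 M.empty_indep
      obtain ⟨g, hg0⟩ := hC₀ne
      have hIg : M.Indep (C₀ \ {g}) := hMcirc.2.2 g hg0
      have heC₀ : e ∉ C₀ := fun hh => (hC₀D hh).2 he
      have hegD : e ∉ C₀ \ {g} := fun hh => heC₀ hh.1
      -- delta of  insert e (C₀ \ {g})  is at least k
      have hvertsub : G.verts (insert e (C₀ \ {g})) ⊆ G.verts C₀ := by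
        rintro w ⟨f, hf, hw⟩
        rcases Set.mem_insert_iff.mp hf with rfl | hfC
        · rw [hz] at hw
          rcases Sym2.mem_iff.mp hw with rfl | rfl
          · exact ⟨fu, hfuC₀, hufu⟩
          · exact ⟨fv, hfvC₀, hvfv⟩
        · exact ⟨f, hfC.1, hw⟩
      have hncard : (insert e (C₀ \ {g})).ncard = C₀.ncard := by
        rw [Set.ncard_insert_of_notMem hegD (Set.toFinite _),
          Set.ncard_diff_singleton_of_mem hg0]
        have h4 : 1 ≤ C₀.ncard := by
          rw [Nat.one_le_iff_ne_zero, Ne, Set.ncard_eq_zero (Set.toFinite _)]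
          rintro rfl
          exact hg0
        omega
      have hdel : (k:ℤ) ≤ G.delta (insert e (C₀ \ {g})) := by
        have h1 : (G.verts (insert e (C₀ \ {g}))).ncard ≤ (G.verts C₀).ncard :=
          Set.ncard_le_ncard hvertsub (Set.toFinite _)
        have h2 : G.delta C₀ = (k:ℤ) := hCS.1
        unfold Multigraph.delta at h2 ⊢
        rw [hncard]
        omega
      have hdep : ¬ M.Indep (insert e (C₀ \ {g})) := not_indep_of_delta_ge hk hMC hdel
      have hclos : e ∈ M.closure (C₀ \ {g}) := by
        rw [hIg.mem_closure_iff]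
        exact Or.inl (Matroid.dep_iff.mpr ⟨hdep, by rw [hME]; exact Set.subset_univ _⟩)
      have : e ∈ M.closure D :=
        M.closure_subset_closure (Set.diff_subset.trans hC₀D) hclos
      exact hcl e he this
  -- pick the special vertex
  obtain ⟨e₀, he₀⟩ := hKne
  obtain ⟨x, hxinc, hxD⟩ := hA' e₀ he₀
  refine ⟨x, Set.Subset.antisymm ?_ ?_⟩
  · -- K ⊆ star x
    intro e he
    by_cases hee : e = e₀
    · subst hee
      exact hxinc
    · by_contra hxe
      have hxe : x ∉ G.inc e := hxe
      -- construct a circuit containing e and e₀ meeting K exactly in {e, e₀}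
      obtain ⟨B, hB, hdisj⟩ := hb e he
      have heB : e ∈ B := by
        obtain ⟨y, hyB, hyK⟩ := ha B hB
        have : y ∉ K \ {e} := fun hmem => (hdisj.le_bot ⟨hmem, hyB⟩ : y ∈ (⊥ : Set E))
        have : y = e := by
          by_contra hne
          exact this ⟨hyK, hne⟩
        exact this ▸ hyB
      have he₀B : e₀ ∉ B := by
        intro hh
        exact (hdisj.le_bot ⟨⟨he₀, fun hq => hee (Set.mem_singleton_iff.mp hq).symm⟩, hh⟩ :
          e₀ ∈ (⊥ : Set E))
      have hdep0 : M.Dep (insert e₀ B) := hB.insert_dep ⟨hKE' he₀, he₀B⟩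
      obtain ⟨C, hCB, hCc⟩ := exists_circuit'_subset hME hdep0.not_indep
      have he₀C : e₀ ∈ C := by
        by_contra hcon
        have : C ⊆ B := fun y hy => by
          rcases Set.mem_insert_iff.mp (hCB hy) with rfl | h
          · exact absurd hy hcon
          · exact h
        exact hCc.2.1 (hB.indep.subset this)
      have hCK : ∀ f ∈ C, f ∈ K → f = e ∨ f = e₀ := by
        intro f hf hfK
        rcases Set.mem_insert_iff.mp (hCB hf) with rfl | hfB
        · exact Or.inr rfl
        · left
          by_contra hne
          exact (hdisj.le_bot ⟨⟨hfK, hne⟩, hfB⟩ : f ∈ (⊥ : Set E))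
      have heC : e ∈ C := by
        by_contra hcon
        have hsub : C \ {e₀} ⊆ D := by
          rintro f ⟨hf, hfne⟩
          refine ⟨hCc.1 hf, ?_⟩
          intro hfK
          rcases hCK f hf hfK with rfl | rfl
          · exact hcon hf
          · exact hfne rfl
        have hI : M.Indep (C \ {e₀}) := hCc.2.2 e₀ he₀C
        have hC' : insert e₀ (C \ {e₀}) = C := Set.insert_diff_singleton.trans
          (Set.insert_eq_of_mem he₀C)
        have : e₀ ∈ M.closure (C \ {e₀}) := by
          rw [hI.mem_closure_iff]
          exact Or.inl (Matroid.dep_iff.mpr ⟨by rw [hC']; exact hCc.2.1,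
            by rw [hME]; exact Set.subset_univ _⟩)
        exact hcl e₀ he₀ (M.closure_subset_closure hsub this)
      have hCS : G.CircuitSet k C := (hMC C).mp hCc
      have hxC : x ∈ G.verts C := ⟨e₀, he₀C, hxinc⟩
      have honly : ∀ f ∈ C, x ∈ G.inc f → f = e₀ := by
        intro f hf hxf
        by_cases hfK : f ∈ K
        · rcases hCK f hf hfK with rfl | rfl
          · exact absurd hxf hxe
          · rfl
        · exact absurd ⟨f, ⟨hCc.1 hf, hfK⟩, hxf⟩ hxD
      have h1 : {f | f ∈ C ∧ x ∈ G.inc f} = {e₀} := by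
        apply Set.Subset.antisymm
        · rintro f ⟨hfC, hxf⟩
          exact honly f hfC hxf
        · rintro f rfl
          exact ⟨he₀C, hxinc⟩
      have hloop : G.inc e₀ = s(x,x) := by
        have hdeg := hCS.2.1 x hxC
        have hdegeq : G.deg C x = {f | f ∈ C ∧ x ∈ G.inc f}.ncard
            + {f | f ∈ C ∧ G.inc f = s(x,x)}.ncard := rfl
        rw [hdegeq, h1, Set.ncard_singleton] at hdeg
        have : {f | f ∈ C ∧ G.inc f = s(x,x)}.Nonempty := by
          apply Set.nonempty_of_ncard_ne_zero
          omega
        obtain ⟨f, hfC, hfeq⟩ := this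
        have : f = e₀ := honly f hfC (by rw [hfeq]; exact Sym2.mem_mk_left x x)
        exact this ▸ hfeq
      have hreach : ∀ b, G.Reach C x b → b = x := by
        intro b hb'
        have hb'' : Relation.ReflTransGen (G.Adj C) x b := hb'
        induction hb'' with
        | refl => rfl
        | tail hr hstep ih =>
          obtain ⟨f, hfC, hfinc⟩ := hstep
          rw [ih hr] at hfinc
          have hf0 : f = e₀ := honly f hfC (by rw [hfinc]; exact Sym2.mem_mk_left x _)
          subst hf0
          rw [hloop] at hfinc
          rcases Sym2.eq_iff.mp hfinc with ⟨-, h4⟩ | ⟨h3, -⟩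
          · exact h4.symm
          · exact h3.symm
      have hcomp : G.edgeComponent C e₀ = {e₀} := by
        apply Set.Subset.antisymm
        · rintro f ⟨hfC, a, ha, b, hbf, hr⟩
          have hax : a = x := by
            rw [hloop] at ha
            rcases Sym2.mem_iff.mp ha with rfl | rfl <;> rfl
          subst hax
          have : b = a := hreach b hr
          subst this
          exact honly f hfC hbf
        · rintro f rfl
          exact ⟨he₀C, x, by rw [hloop]; exact Sym2.mem_mk_left x x,
            x, by rw [hloop]; exact Sym2.mem_mk_left x x, Relation.ReflTransGen.refl⟩
      have hverts : G.verts ({e₀} : Set E) = {x} := by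
        ext w
        constructor
        · rintro ⟨f, rfl, hw⟩
          rw [hloop] at hw
          rcases Sym2.mem_iff.mp hw with rfl | rfl <;> rfl
        · intro hw
          refine ⟨e₀, rfl, ?_⟩
          rw [hloop, Sym2.mem_iff]
          exact Or.inl (Set.mem_singleton_iff.mp hw)
      have hcyc : G.IsCycleSet ({e₀} : Set E) := by
        refine ⟨⟨e₀, rfl⟩, ?_, ?_⟩
        · intro a ha b hb'
          rw [hverts] at ha hb'
          rw [Set.mem_singleton_iff.mp ha, Set.mem_singleton_iff.mp hb']
          exact Relation.ReflTransGen.refl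
        · intro w hw
          rw [hverts, Set.mem_singleton_iff] at hw
          subst hw
          have hAeq : {f | f ∈ ({e₀} : Set E) ∧ w ∈ G.inc f} = {e₀} := by
            apply Set.Subset.antisymm
            · rintro f ⟨hf, -⟩; exact hf
            · rintro f rfl
              exact ⟨rfl, by rw [hloop]; exact Sym2.mem_mk_left w w⟩
          have hBeq : {f | f ∈ ({e₀} : Set E) ∧ G.inc f = s(w,w)} = {e₀} := by
            apply Set.Subset.antisymm
            · rintro f ⟨hf, -⟩; exact hf
            · rintro f rfl
              exact ⟨rfl, hloop⟩
          have : G.deg ({e₀} : Set E) w = {f | f ∈ ({e₀} : Set E) ∧ w ∈ G.inc f}.ncard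
              + {f | f ∈ ({e₀} : Set E) ∧ G.inc f = s(w,w)}.ncard := rfl
          rw [this, hAeq, hBeq, Set.ncard_singleton]
      exact hCS.2.2 e₀ he₀C (by rw [hcomp]; exact hcyc)
  · -- star x ⊆ K
    intro f hf
    by_contra hfK
    exact hxD ⟨f, ⟨by rw [hME]; trivial, hfK⟩, hf⟩
end

section
/- Let G be a finite 3-connected simple graph with vertex set of size v and edge set of size e, and suppose some vertex x has degree d(x,G) > e − v. Then G is a wheel with center x; in particular d(x,G) = v − 1 and every other vertex has degree 3. -/
private lemma stmt19_mindeg3 {V : Type*} [Fintype V] [DecidableEq V]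
    (G : SimpleGraph V) [DecidableRel G.Adj]
    (hcard : 4 ≤ Fintype.card V)
    (h3conn : ∀ a b : V, (G.induce {v : V | v ≠ a ∧ v ≠ b}).Connected)
    (z : V) : 3 ≤ G.degree z := by
  by_contra hlt
  push_neg at hlt
  have hc : (G.neighborFinset z).card ≤ 2 := by
    rw [← G.card_neighborFinset_eq_degree] at hlt; omega
  obtain ⟨a, b, ha, hb, hab⟩ :
      ∃ a b : V, a ≠ z ∧ b ≠ z ∧ G.neighborFinset z ⊆ {a, b} := by
    have hzn : z ∉ G.neighborFinset z := by simp
    interval_cases h : (G.neighborFinset z).card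
    · obtain ⟨a, ha⟩ : ∃ a : V, a ≠ z := by
        have : 1 < Fintype.card V := by omega
        exact Fintype.exists_ne_of_one_lt_card this z
      exact ⟨a, a, ha, ha, by simp [Finset.card_eq_zero.mp h]⟩
    · obtain ⟨a, ha⟩ := Finset.card_eq_one.mp h
      have haz : a ≠ z := by intro h; apply hzn; rw [ha]; simp [h]
      exact ⟨a, a, haz, haz, by simp [ha]⟩
    · obtain ⟨a, b, hne, hs⟩ := Finset.card_eq_two.mp h
      have haz : a ≠ z := by intro h; apply hzn; rw [hs]; simp [h]
      have hbz : b ≠ z := by intro h; apply hzn; rw [hs]; simp [h]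
      exact ⟨a, b, haz, hbz, by simp [hs]⟩
  set S : Set V := {v : V | v ≠ a ∧ v ≠ b} with hS
  have hzS : z ∈ S := ⟨Ne.symm ha, Ne.symm hb⟩
  obtain ⟨w, hw⟩ : ∃ w : V, w ∉ ({z, a, b} : Finset V) := by
    by_contra hall
    push_neg at hall
    have : (Finset.univ : Finset V) ⊆ {z, a, b} := fun v _ => hall v
    have := Finset.card_le_card this
    have h3 : ({z, a, b} : Finset V).card ≤ 3 := by
      refine (Finset.card_insert_le _ _).trans ?_
      have := Finset.card_insert_le a ({b} : Finset V)
      simp at this ⊢; omega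
    simp [Finset.card_univ] at this
    omega
  simp at hw
  obtain ⟨hwz, hwa, hwb⟩ := hw
  have hwS : w ∈ S := ⟨hwa, hwb⟩
  have hconn := h3conn a b
  obtain ⟨p⟩ := hconn.preconnected ⟨z, hzS⟩ ⟨w, hwS⟩
  cases p with
  | nil => exact hwz rfl
  | cons hadj q =>
    rename_i u
    have : G.Adj z u.val := by simpa using hadj
    have hu : u.val ∈ G.neighborFinset z := by simpa using this
    have := hab hu
    simp at this
    rcases this with h | h
    · exact u.property.1 h
    · exact u.property.2 h

/-- a finite 3-connected simple graph with a vertex `x` of degree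
`d(x,G) > |E| - |V|` is the wheel with center `x`; in particular
`d(x,G) = |V| - 1` and every other vertex has degree `3`. -/
theorem stmt19 {V : Type*} [Fintype V] [DecidableEq V]
    (G : SimpleGraph V) [DecidableRel G.Adj]
    (hcard : 4 ≤ Fintype.card V)
    (h3conn : ∀ a b : V, (G.induce {v : V | v ≠ a ∧ v ≠ b}).Connected)
    (x : V)
    (hx : (G.edgeFinset.card : ℤ) - (Fintype.card V : ℤ) < (G.degree x : ℤ)) :
    (∀ z : V, z ≠ x → G.Adj x z) ∧
    (G.induce {z : V | z ≠ x}).Connected ∧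
    (∀ z : V, z ≠ x → ({w : V | w ≠ x ∧ G.Adj z w}).ncard = 2) ∧
    G.degree x = Fintype.card V - 1 ∧
    (∀ z : V, z ≠ x → G.degree z = 3) := by
  have hmin : ∀ z : V, 3 ≤ G.degree z := stmt19_mindeg3 G hcard h3conn
  -- counting argument
  have hxn : G.edgeFinset.card < G.degree x + Fintype.card V := by
    have := hx; omega
  have hdlt : G.degree x < Fintype.card V := G.degree_lt_card_verts x
  have hsum : ∑ v, G.degree v = 2 * G.edgeFinset.card :=
    G.sum_degrees_eq_twice_card_edges
  have hsplit : G.degree x + ∑ v ∈ Finset.univ.erase x, G.degree v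
      = ∑ v, G.degree v := by
    rw [Finset.add_sum_erase _ (fun v => G.degree v) (Finset.mem_univ x)]
  have hcarde : (Finset.univ.erase x).card = Fintype.card V - 1 := by
    simp [Finset.card_erase_of_mem]
  have hlb : 3 * (Fintype.card V - 1) ≤ ∑ v ∈ Finset.univ.erase x, G.degree v := by
    calc 3 * (Fintype.card V - 1) = (Finset.univ.erase x).card * 3 := by rw [hcarde]; ring
    _ ≤ ∑ v ∈ Finset.univ.erase x, G.degree v := by
        rw [← smul_eq_mul]
        exact Finset.card_nsmul_le_sum _ _ _ (fun v _ => hmin v)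
  have hdeq : G.degree x = Fintype.card V - 1 := by omega
  have hdeg3 : ∀ z : V, z ≠ x → G.degree z = 3 := by
    intro z hz
    have hzmem : z ∈ Finset.univ.erase x := Finset.mem_erase.mpr ⟨hz, Finset.mem_univ z⟩
    have hsplit2 : G.degree z + ∑ v ∈ (Finset.univ.erase x).erase z, G.degree v
        = ∑ v ∈ Finset.univ.erase x, G.degree v := by
      rw [Finset.add_sum_erase _ (fun v => G.degree v) hzmem]
    have hcarde2 : ((Finset.univ.erase x).erase z).card = Fintype.card V - 2 := by
      rw [Finset.card_erase_of_mem hzmem, hcarde]; omega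
    have hlb2 : 3 * (Fintype.card V - 2) ≤ ∑ v ∈ (Finset.univ.erase x).erase z, G.degree v := by
      calc 3 * (Fintype.card V - 2) = ((Finset.univ.erase x).erase z).card * 3 := by
            rw [hcarde2]; ring
      _ ≤ _ := by
          rw [← smul_eq_mul]
          exact Finset.card_nsmul_le_sum _ _ _ (fun v _ => hmin v)
    have := hmin z
    omega
  -- x is adjacent to everyone else
  have hadjall : ∀ z : V, z ≠ x → G.Adj x z := by
    have hsub : G.neighborFinset x ⊆ Finset.univ.erase x := by
      intro v hv
      simp only [SimpleGraph.mem_neighborFinset] at hv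
      exact Finset.mem_erase.mpr ⟨(G.ne_of_adj hv).symm, Finset.mem_univ v⟩
    have hcards : (Finset.univ.erase x).card ≤ (G.neighborFinset x).card := by
      rw [G.card_neighborFinset_eq_degree, hdeq, hcarde]
    have heq := Finset.eq_of_subset_of_card_le hsub hcards
    intro z hz
    have : z ∈ G.neighborFinset x := by
      rw [heq]; exact Finset.mem_erase.mpr ⟨hz, Finset.mem_univ z⟩
    simpa using this
  refine ⟨hadjall, ?_, ?_, hdeq, hdeg3⟩
  · have hset : {v : V | v ≠ x ∧ v ≠ x} = {z : V | z ≠ x} := by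
      ext v; simp
    exact hset ▸ h3conn x x
  · intro z hz
    have hA : {w : V | w ≠ x ∧ G.Adj z w} = ↑((G.neighborFinset z).erase x) := by
      ext w
      simp [and_comm]
    rw [hA, Set.ncard_coe_finset]
    have hxz : x ∈ G.neighborFinset z := by
      simp [ (hadjall z hz).symm ]
    rw [Finset.card_erase_of_mem hxz, G.card_neighborFinset_eq_degree, hdeg3 z hz]
end
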